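/- arXiv:1907.00432 — 2 statements merged into one kernel-verified Lean document; each statement's English description precedes it below -/
import Mathlib

section
/- More generally, if D is a compact linear order and d₀ ∈ D is neither the least nor the greatest element of D, then L^{ω₁}_{(D,d₀)} = {x ∈ D^{ω₁} : the set of α with x(α) ≠ d₀ is countable}, ordered lexicographically, is countably saturated. -/
open Ordinal

/-- Countable saturation of a linear order. -/
def CSat (L : Type*) [LinearOrder L] : Prop :=
  DenselyOrdered L ∧ NoMinOrder L ∧ NoMaxOrder L ∧
  (∀ x : ℕ → L, StrictMono x → ∀ s, ¬ IsLUB (Set.range x) s) ∧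
  (∀ y : ℕ → L, StrictAnti y → ∀ s, ¬ IsGLB (Set.range y) s) ∧
  (∀ x y : ℕ → L, StrictMono x → StrictAnti y → (∀ n, x n < y n) →
    ∃ z, ∀ n, x n < z ∧ z < y n)

/-- A compact line: every subset has a supremum and an infimum. -/
def CompactLine (K : Type*) [LinearOrder K] : Prop :=
  ∀ S : Set K, (∃ a, IsLUB S a) ∧ (∃ a, IsGLB S a)

/-!
Two members of a lexicographic power compare as they do at their first difference. Countably
many strict comparisons with a point `s` of `D^{ω₁}` are therefore all decided below some
`η < ω₁` (countable sets are bounded in `ω₁`), and every `z` agreeing with `s` below `η`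
satisfies them too. Taking for `z` the point `s` changed at a coordinate `η` beyond its support
(where `s η = d₀`) to a value above or below `d₀` gives density, the absence of endpoints and
of countable suprema and infima. For an `(ω, ω)`-gap, the supremum `s` of the lower sequence in
the full power (which exists because `D` is complete) lies strictly inside the gap, and cutting
`s` off to `d₀` from `η` on gives a countably supported `z` in the gap, since initial segments of
`ω₁` are countable.
-/

open Set Function

namespace Pi.Lex

variable {K D : Type*}

section Preorder

variable [Preorder K] [Preorder D] {ι : Type*} [Countable ι]

theorem exists_forall_lt_of_eqOn_Iio
    (hK : ∀ C : Set K, C.Countable → ∃ η, ∀ c ∈ C, c < η) {C : Set K} (hC : C.Countable)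
    {s : Lex (K → D)} {u : ι → Lex (K → D)} (hu : ∀ i, u i < s) :
    ∃ η, (∀ c ∈ C, c < η) ∧
      ∀ z : Lex (K → D), EqOn (ofLex z) (ofLex s) (Iio η) → ∀ i, u i < z := by
  choose β hagree hlt using hu
  obtain ⟨η, hη⟩ := hK (C ∪ range β) (hC.union (countable_range β))
  have hβη (i : ι) : β i < η := hη _ (.inr ⟨i, rfl⟩)
  refine ⟨η, fun c hc => hη c (.inl hc), fun z hz i => ⟨β i, fun j hj => ?_, ?_⟩⟩
  · exact (hagree i j hj).trans (hz (hj.trans (hβη i))).symm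
  · exact (hlt i).trans_eq (hz (hβη i)).symm

theorem exists_forall_gt_of_eqOn_Iio
    (hK : ∀ C : Set K, C.Countable → ∃ η, ∀ c ∈ C, c < η) {C : Set K} (hC : C.Countable)
    {s : Lex (K → D)} {v : ι → Lex (K → D)} (hv : ∀ i, s < v i) :
    ∃ η, (∀ c ∈ C, c < η) ∧
      ∀ z : Lex (K → D), EqOn (ofLex z) (ofLex s) (Iio η) → ∀ i, z < v i := by
  choose β hagree hlt using hv
  obtain ⟨η, hη⟩ := hK (C ∪ range β) (hC.union (countable_range β))
  have hβη (i : ι) : β i < η := hη _ (.inr ⟨i, rfl⟩)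
  refine ⟨η, fun c hc => hη c (.inl hc), fun z hz i => ⟨β i, fun j hj => ?_, ?_⟩⟩
  · exact (hz (hj.trans (hβη i))).trans (hagree i j hj)
  · exact (hz (hβη i)).trans_lt (hlt i)

end Preorder

/-- The supremum is built by transfinite recursion: its value at `α` is the supremum of the
values at `α` of those members of `A` that agree with it below `α`. -/
theorem exists_isLUB [LinearOrder K] [WellFoundedLT K] [LinearOrder D]
    (hD : ∀ S : Set D, ∃ a, IsLUB S a) (A : Set (Lex (K → D))) :
    ∃ s, IsLUB A s := by
  choose sup hsup using hD
  let s : K → D := WellFoundedLT.fix fun α s' =>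
    sup {d | ∃ a ∈ A, (∀ β (h : β < α), ofLex a β = s' β h) ∧ ofLex a α = d}
  have hs (α : K) :
      IsLUB {d | ∃ a ∈ A, (∀ β < α, ofLex a β = s β) ∧ ofLex a α = d} (s α) := by
    rw [show s α = _ from WellFoundedLT.fix_eq _ α]
    exact hsup _
  refine ⟨toLex s, fun a ha => ?_, fun u hu => ?_⟩
  · by_contra! ⟨α, hagree, hlt⟩
    exact hlt.not_ge ((hs α).1 ⟨a, ha, fun β hβ => (hagree β hβ).symm, rfl⟩)
  · by_contra! ⟨α, hagree, hlt⟩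
    obtain ⟨_, ⟨a, ha, hagree', rfl⟩, hlt'⟩ := (lt_isLUB_iff (hs α)).1 hlt
    exact (hu ha).not_gt ⟨α, fun β hβ => (hagree β hβ).trans (hagree' β hβ).symm, hlt'⟩

end Pi.Lex

namespace Ordinal

universe u

theorem exists_gt_of_countable_omega_one {C : Set (ω_ 1 : Ordinal.{u}).ToType}
    (hC : C.Countable) : ∃ η, ∀ c ∈ C, c < η := by
  by_contra! h
  have hcof := Order.cof_le (s := C) fun a => h a
  rw [cof_toType, Cardinal.cof_omega_one] at hcof
  exact hcof.not_gt (Cardinal.lt_aleph_one_iff.2 hC.le_aleph0)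

theorem countable_Iio_omega_one (η : (ω_ 1 : Ordinal.{u}).ToType) : (Iio η).Countable :=
  Cardinal.le_aleph0_iff_set_countable.1 <| Cardinal.lt_aleph_one_iff.1 <|
    by simpa using Cardinal.mk_Iio_lt η (by simp [Cardinal.ord_aleph])

end Ordinal

abbrev CountableSupportLex (K : Type*) {D : Type*} [LinearOrder K] [WellFoundedLT K]
    [LinearOrder D] (d₀ : D) :=
  {x : Lex (K → D) // {α | ofLex x α ≠ d₀}.Countable}

namespace CountableSupportLex

theorem apply_eq_of_forall_lt {K D : Type*} [Preorder K] {f : K → D} {d₀ : D} {η : K}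
    (hη : ∀ α ∈ {α | f α ≠ d₀}, α < η) : f η = d₀ :=
  of_not_not fun h => (hη η h).false

variable {K D : Type*} [LinearOrder K] [WellFoundedLT K] [LinearOrder D] {d₀ a b : D}

def update (x : CountableSupportLex K d₀) (η : K) (d : D) : CountableSupportLex K d₀ :=
  ⟨toLex (Function.update (ofLex x.1) η d), (x.2.insert η).mono fun α hα => by
    rcases eq_or_ne α η with rfl | hne
    · exact mem_insert _ _
    · exact mem_insert_of_mem _ (by simpa [update_of_ne hne] using hα)⟩

variable {x : CountableSupportLex K d₀} {η : K} {d : D}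

theorem lt_update_iff : x < x.update η d ↔ ofLex x.1 η < d :=
  Pi.lt_toLex_update_self_iff

theorem update_lt_iff : x.update η d < x ↔ d < ofLex x.1 η :=
  Pi.toLex_update_lt_self_iff

theorem eqOn_update : EqOn (ofLex (x.update η d).1) (ofLex x.1) (Iio η) :=
  fun _ hj => update_of_ne hj.ne _ _

variable (hK : ∀ C : Set K, C.Countable → ∃ η, ∀ c ∈ C, c < η)
include hK

theorem denselyOrdered (hb : d₀ < b) : DenselyOrdered (CountableSupportLex K d₀) := by
  refine ⟨fun x y hxy => ?_⟩
  obtain ⟨η, hη, hz⟩ :=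
    Pi.Lex.exists_forall_gt_of_eqOn_Iio (v := fun _ : Unit => y.1) hK x.2 fun _ => hxy
  exact ⟨x.update η b, lt_update_iff.2 (by rwa [apply_eq_of_forall_lt hη]),
    hz _ eqOn_update ()⟩

theorem noMaxOrder (hb : d₀ < b) : NoMaxOrder (CountableSupportLex K d₀) := by
  refine ⟨fun x => ?_⟩
  obtain ⟨η, hη⟩ := hK _ x.2
  exact ⟨x.update η b, lt_update_iff.2 (by rwa [apply_eq_of_forall_lt hη])⟩

theorem noMinOrder (ha : a < d₀) : NoMinOrder (CountableSupportLex K d₀) := by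
  refine ⟨fun x => ?_⟩
  obtain ⟨η, hη⟩ := hK _ x.2
  exact ⟨x.update η a, update_lt_iff.2 (by rwa [apply_eq_of_forall_lt hη])⟩

theorem not_isLUB_range (ha : a < d₀) {x : ℕ → CountableSupportLex K d₀} (hx : StrictMono x)
    (s : CountableSupportLex K d₀) : ¬ IsLUB (range x) s := by
  intro hs
  have hxs (n : ℕ) : x n < s := (hx n.lt_succ_self).trans_le (hs.1 ⟨n + 1, rfl⟩)
  obtain ⟨η, hη, hz⟩ :=
    Pi.Lex.exists_forall_lt_of_eqOn_Iio (u := fun n => (x n).1) hK s.2 hxs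
  have hlt : s.update η a < s := update_lt_iff.2 (by rwa [apply_eq_of_forall_lt hη])
  exact hlt.not_ge (hs.2 (forall_mem_range.2 fun n => (hz _ eqOn_update n).le))

theorem not_isGLB_range (hb : d₀ < b) {y : ℕ → CountableSupportLex K d₀} (hy : StrictAnti y)
    (s : CountableSupportLex K d₀) : ¬ IsGLB (range y) s := by
  intro hs
  have hsy (n : ℕ) : s < y n := (hs.1 ⟨n + 1, rfl⟩).trans_lt (hy n.lt_succ_self)
  obtain ⟨η, hη, hz⟩ :=
    Pi.Lex.exists_forall_gt_of_eqOn_Iio (v := fun n => (y n).1) hK s.2 hsy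
  have hlt : s < s.update η b := lt_update_iff.2 (by rwa [apply_eq_of_forall_lt hη])
  exact hlt.not_ge (hs.2 (forall_mem_range.2 fun n => (hz _ eqOn_update n).le))

theorem exists_between_of_strictMono_of_strictAnti (hIio : ∀ η : K, (Iio η).Countable)
    (hD : ∀ S : Set D, ∃ a, IsLUB S a) {x y : ℕ → CountableSupportLex K d₀}
    (hx : StrictMono x) (hy : StrictAnti y) (hxy : ∀ n, x n < y n) :
    ∃ z, ∀ n, x n < z ∧ z < y n := by
  have hxy' (m n : ℕ) : x m < y n :=
    (hx.monotone (le_max_left m n)).trans_lt <| (hxy _).trans_le (hy.antitone (le_max_right m n))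
  obtain ⟨s, hs⟩ := Pi.Lex.exists_isLUB hD (range fun n => (x n).1)
  have hxs (n : ℕ) : (x n).1 < s :=
    (Subtype.coe_lt_coe.2 (hx n.lt_succ_self)).trans_le (hs.1 ⟨n + 1, rfl⟩)
  have hsy (n : ℕ) : s < (y n).1 :=
    (hs.2 (forall_mem_range.2 fun m => (hxy' m (n + 1)).le)).trans_lt (hy n.lt_succ_self)
  obtain ⟨η₁, -, hz₁⟩ := Pi.Lex.exists_forall_lt_of_eqOn_Iio hK countable_empty hxs
  obtain ⟨η, hη, hz⟩ := Pi.Lex.exists_forall_gt_of_eqOn_Iio hK (countable_singleton η₁) hsy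
  let z : CountableSupportLex K d₀ :=
    ⟨toLex fun j => if j < η then ofLex s j else d₀, (hIio η).mono fun j hj => by
      by_contra h
      exact hj (if_neg h)⟩
  have hzs : EqOn (ofLex z.1) (ofLex s) (Iio η) := fun j hj => if_pos hj
  exact ⟨z, fun n => ⟨hz₁ _ (hzs.mono (Iio_subset_Iio (hη η₁ rfl).le)) n, hz _ hzs n⟩⟩

end CountableSupportLex

theorem stmt7 (D : Type) [LinearOrder D] (hD : CompactLine D) (d₀ : D)
    (hmin : ∃ a, a < d₀) (hmax : ∃ b, d₀ < b) :
    CSat {x : Lex ((ω_ 1).ToType → D) // {α | ofLex x α ≠ d₀}.Countable} := by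
  obtain ⟨a, ha⟩ := hmin
  obtain ⟨b, hb⟩ := hmax
  have hK (C : Set (ω_ 1).ToType) (hC : C.Countable) := exists_gt_of_countable_omega_one hC
  open CountableSupportLex in
  exact ⟨denselyOrdered hK hb, noMinOrder hK ha, noMaxOrder hK hb,
    fun _ hx => not_isLUB_range hK ha hx, fun _ hy => not_isGLB_range hK hb hy,
    fun _ _ hx hy hxy => exists_between_of_strictMono_of_strictAnti hK
      countable_Iio_omega_one (fun S => (hD S).1) hx hy hxy⟩
end

section
/- If A and B are subsets of a common linear order, and each of A and B embeds into I^α for some countable ordinal α (where I = [0,1] with lexicographic powers), then A ∪ B embeds into I^β for some countable ordinal β. In other words, countable I-dimension is preserved under finite unions of subsets of a common linear order. -/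
/-!
Extend the embeddings `f : A → R^ι` and `g : B → R^κ` to monotone maps `F₁`, `F₂` on `A ∪ B` by
taking least upper bounds, which exist because a lexicographic power of a complete linear order
over a well-order is complete. Then `x ↦ (F₁ x, F₂ x)` into `R^(ι + κ)` is monotone and each of
its fibres has at most two points: of any three points two lie in `A` or two lie in `B`, where
`F₁` resp. `F₂` is injective. One more coordinate, `⊤` at the larger point of a two-point fibre
and `⊥` elsewhere, makes the map strictly monotone into `R^(ι + κ + 1)`, and `ι + κ + 1` is still
a countable well-order.
-/

open Ordinal Set

instance Sum.Lex.wellFoundedLT {α β : Type*} [LT α] [LT β] [WellFoundedLT α] [WellFoundedLT β] :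
    WellFoundedLT (α ⊕ₗ β) :=
  ⟨Sum.lex_wf wellFounded_lt wellFounded_lt⟩

instance Sum.Lex.countable {α β : Type*} [Countable α] [Countable β] : Countable (α ⊕ₗ β) :=
  inferInstanceAs (Countable (α ⊕ β))

theorem Ordinal.countable_toType_of_lt_omega_one {o : Ordinal} (ho : o < ω₁) :
    Countable o.ToType := by
  rwa [Cardinal.lt_omega_iff_card_lt, ← Cardinal.mk_toType, Cardinal.lt_aleph_one_iff,
    Cardinal.mk_le_aleph0_iff] at ho

theorem Ordinal.exists_lt_omega_one_orderIso_toType.{u, v} (J : Type v) [LinearOrder J]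
    [WellFoundedLT J] [Countable J] : ∃ β : Ordinal.{u}, β < ω₁ ∧ Nonempty (β.ToType ≃o J) := by
  have hJ : lift.{u, v} (typeLT J) < ω₁ := by
    rw [lift_lt_omega_one, Cardinal.lt_omega_iff_card_lt, card_type, Cardinal.lt_aleph_one_iff]
    exact Cardinal.mk_le_aleph0
  obtain ⟨β, hβ⟩ := mem_range_lift_of_le (a := (ω₁ : Ordinal.{u})) (b := lift.{u, v} (typeLT J))
    (by rw [lift_omega, lift_one]; exact hJ.le)
  refine ⟨β, lift_lt_omega_one.mp (hβ ▸ hJ), ?_⟩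
  rw [← type_toType β] at hβ
  exact ⟨OrderIso.ofRelIsoLT (lift_type_eq.{u, v, 0}.mp hβ).some⟩

theorem Monotone.exists_monotone_extension_of_forall_isLUB {α β : Type*} [Preorder α]
    [PartialOrder β] {s : Set α} {f : s → β} (hf : Monotone f)
    (hβ : ∀ S : Set β, ∃ b, IsLUB S b) : ∃ g : α → β, Monotone g ∧ ∀ a : s, g a = f a := by
  choose sup hsup using hβ
  refine ⟨fun x => sup (f '' {a | (a : α) ≤ x}),
    fun x y hxy => (hsup _).mono (hsup _) (image_mono fun a ha => le_trans ha hxy),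
    fun a => (hsup _).unique ?_⟩
  exact ((hf.monotoneOn _).map_isGreatest ⟨le_refl (a : α), fun b hb => hb⟩).isLUB

theorem eq_or_eq_or_eq_of_injOn_union {α β γ : Type*} {s t : Set α} {F₁ : α → β} {F₂ : α → γ}
    (h₁ : InjOn F₁ s) (h₂ : InjOn F₂ t) {x y z : α} (hx : x ∈ s ∪ t) (hy : y ∈ s ∪ t)
    (hz : z ∈ s ∪ t) (hxy₁ : F₁ x = F₁ y) (hxy₂ : F₂ x = F₂ y) (hyz₁ : F₁ y = F₁ z)
    (hyz₂ : F₂ y = F₂ z) : x = y ∨ y = z ∨ x = z := by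
  rcases hx with hx | hx <;> rcases hy with hy | hy <;> rcases hz with hz | hz <;>
    first
    | exact .inl (h₁ hx hy hxy₁)
    | exact .inl (h₂ hx hy hxy₂)
    | exact .inr (.inl (h₁ hy hz hyz₁))
    | exact .inr (.inl (h₂ hy hz hyz₂))
    | exact .inr (.inr (h₁ hx hz (hxy₁.trans hyz₁)))
    | exact .inr (.inr (h₂ hx hz (hxy₂.trans hyz₂)))

open Classical in
noncomputable def fiberFlag {α β γ : Type*} [LT α] (g : α → β) (a b : γ) (x : α) : γ :=
  if ∃ w < x, g w = g x then b else a

theorem fiberFlag_lt_fiberFlag {α β γ : Type*} [LT α] [Preorder γ] {g : α → β} {a b : γ}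
    (hg : ∀ ⦃x y z⦄, x < y → y < z → g x = g y → g y = g z → False) (hab : a < b)
    {x y : α} (hxy : x < y) (he : g x = g y) : fiberFlag g a b x < fiberFlag g a b y := by
  have hy : ∃ w < y, g w = g y := ⟨x, hxy, he⟩
  have hx : ¬ ∃ w < x, g w = g x := fun ⟨w, hw, hwx⟩ => hg hw hxy hwx he
  simpa only [fiberFlag, if_pos hy, if_neg hx] using hab

namespace Pi

variable {ι R : Type*} [LinearOrder ι] [WellFoundedLT ι] [CompleteLinearOrder R]

noncomputable def lexSup (S : Set (Lex (ι → R))) : ι → R :=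
  WellFounded.fix wellFounded_lt fun i rec =>
    sSup ((fun f : Lex (ι → R) => ofLex f i) '' {f ∈ S | ∀ j (h : j < i), ofLex f j = rec j h})

theorem lexSup_apply (S : Set (Lex (ι → R))) (i : ι) :
    lexSup S i =
      sSup ((fun f : Lex (ι → R) => ofLex f i) '' {f ∈ S | ∀ j < i, ofLex f j = lexSup S j}) := by
  rw [lexSup, WellFounded.fix_eq]

theorem isLUB_toLex_lexSup (S : Set (Lex (ι → R))) : IsLUB S (toLex (lexSup S)) := by
  refine ⟨fun f hf => not_lt.mp ?_, fun u hu => not_lt.mp ?_⟩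
  · rintro ⟨i, hagree, hlt⟩
    refine hlt.not_ge ?_
    change ofLex f i ≤ lexSup S i
    rw [lexSup_apply]
    exact le_sSup ⟨f, ⟨hf, fun j hj => (hagree j hj).symm⟩, rfl⟩
  · rintro ⟨i, hagree, hlt⟩
    change ofLex u i < lexSup S i at hlt
    rw [lexSup_apply, lt_sSup_iff] at hlt
    obtain ⟨_, ⟨f, ⟨hf, hfi⟩, rfl⟩, hlt⟩ := hlt
    exact (hu hf).not_gt ⟨i, fun j hj => (hagree j hj).trans (hfi j hj).symm, hlt⟩

end Pi

namespace Pi.Lex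

section Append

variable {ι κ R : Type*}

def append (x : Lex (ι → R)) (y : Lex (κ → R)) : Lex (ι ⊕ₗ κ → R) :=
  toLex fun j => Sum.elim (ofLex x) (ofLex y) (ofLex j)

theorem append_inj {x x' : Lex (ι → R)} {y y' : Lex (κ → R)} :
    append x y = append x' y' ↔ x = x' ∧ y = y' := by
  refine ⟨fun h => ⟨funext fun i => congrFun h (toLex (.inl i)),
    funext fun k => congrFun h (toLex (.inr k))⟩, fun ⟨hx, hy⟩ => hx ▸ hy ▸ rfl⟩

section LT

variable [LT ι] [LT κ] [LT R]

theorem append_lt_append_left {x x' : Lex (ι → R)} (h : x < x') (y y' : Lex (κ → R)) :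
    append x y < append x' y' := by
  obtain ⟨i, hagree, hi⟩ := h
  refine ⟨toLex (.inl i), fun j hj => ?_, hi⟩
  rcases j with j | k
  · exact hagree j (Sum.Lex.inl_lt_inl_iff.mp hj)
  · exact absurd hj Sum.Lex.not_inr_lt_inl

theorem append_lt_append_right (x : Lex (ι → R)) {y y' : Lex (κ → R)} (h : y < y') :
    append x y < append x y' := by
  obtain ⟨k, hagree, hk⟩ := h
  refine ⟨toLex (.inr k), fun j hj => ?_, hk⟩
  rcases j with j | k'
  · rfl
  · exact hagree k' (Sum.Lex.inr_lt_inr_iff.mp hj)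

end LT

variable [LinearOrder ι] [LinearOrder κ] [PartialOrder R]

theorem append_le_append {x x' : Lex (ι → R)} {y y' : Lex (κ → R)} (hx : x ≤ x') (hy : y ≤ y') :
    append x y ≤ append x' y' := by
  rcases hx.lt_or_eq with hx | rfl
  · exact (append_lt_append_left hx y y').le
  rcases hy.lt_or_eq with hy | rfl
  · exact (append_lt_append_right x hy).le
  · rfl

theorem strictMono_append {α : Type*} [Preorder α] {g : α → Lex (ι → R)} {c : α → Lex (κ → R)}
    (hg : Monotone g) (hc : ∀ ⦃x y⦄, x < y → g x = g y → c x < c y) :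
    StrictMono fun x => append (g x) (c x) := by
  intro x y hxy
  rcases (hg hxy.le).lt_or_eq with h | h
  · exact append_lt_append_left h _ _
  · dsimp only
    rw [h]
    exact append_lt_append_right _ (hc hxy h)

end Append

theorem strictMono_comp_orderIso {ι κ R : Type*} [LinearOrder ι] [LinearOrder κ]
    [PartialOrder R] (e : ι ≃o κ) :
    StrictMono fun x : Lex (κ → R) => toLex (ofLex x ∘ e) := by
  rintro x y ⟨k, hagree, hk⟩
  refine ⟨e.symm k, fun i hi => hagree (e i) (e.lt_symm_apply.mp hi), ?_⟩
  simpa using hk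

end Pi.Lex

open Pi.Lex in
theorem exists_strictMono_union_to_piLex_sum {L : Type*} [LinearOrder L] {A B : Set L}
    {ι κ R : Type*} [LinearOrder ι] [WellFoundedLT ι] [LinearOrder κ] [WellFoundedLT κ]
    [CompleteLinearOrder R] [Nontrivial R] (f : A ↪o Lex (ι → R)) (g : B ↪o Lex (κ → R)) :
    ∃ F : ↥(A ∪ B) → Lex ((ι ⊕ₗ κ) ⊕ₗ Unit → R), StrictMono F := by
  obtain ⟨F₁, hF₁, hf⟩ :=
    f.monotone.exists_monotone_extension_of_forall_isLUB fun S => ⟨_, Pi.isLUB_toLex_lexSup S⟩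
  obtain ⟨F₂, hF₂, hg⟩ :=
    g.monotone.exists_monotone_extension_of_forall_isLUB fun S => ⟨_, Pi.isLUB_toLex_lexSup S⟩
  have hinj₁ : InjOn F₁ A := fun a ha b hb h =>
    congrArg Subtype.val <| f.injective <| (hf ⟨a, ha⟩).symm.trans (h.trans (hf ⟨b, hb⟩))
  have hinj₂ : InjOn F₂ B := fun a ha b hb h =>
    congrArg Subtype.val <| g.injective <| (hg ⟨a, ha⟩).symm.trans (h.trans (hg ⟨b, hb⟩))
  let G : ↥(A ∪ B) → Lex (ι ⊕ₗ κ → R) := fun x => append (F₁ x) (F₂ x)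
  have hG : Monotone G := fun x y hxy => append_le_append (hF₁ hxy) (hF₂ hxy)
  have hG₃ : ∀ ⦃x y z⦄, x < y → y < z → G x = G y → G y = G z → False := by
    intro x y z hxy hyz hGxy hGyz
    obtain ⟨h₁xy, h₂xy⟩ := append_inj.mp hGxy
    obtain ⟨h₁yz, h₂yz⟩ := append_inj.mp hGyz
    rcases eq_or_eq_or_eq_of_injOn_union hinj₁ hinj₂ x.2 y.2 z.2 h₁xy h₂xy h₁yz h₂yz with
      h | h | h
    · exact hxy.ne (Subtype.ext h)
    · exact hyz.ne (Subtype.ext h)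
    · exact (hxy.trans hyz).ne (Subtype.ext h)
  have hflag : toLex (fun _ : Unit => (⊥ : R)) < toLex fun _ => ⊤ :=
    Pi.Lex.lt_iff_of_unique.mpr bot_lt_top
  exact ⟨_, strictMono_append hG fun x y => fiberFlag_lt_fiberFlag hG₃ hflag⟩

theorem stmt11 (L : Type) [LinearOrder L] (A B : Set L)
    (hA : ∃ α : Ordinal, α < ω_ 1 ∧
      Nonempty (A ↪o Lex (α.ToType → Set.Icc (0 : ℝ) 1)))
    (hB : ∃ α : Ordinal, α < ω_ 1 ∧
      Nonempty (B ↪o Lex (α.ToType → Set.Icc (0 : ℝ) 1))) :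
    ∃ β : Ordinal, β < ω_ 1 ∧
      Nonempty (↥(A ∪ B) ↪o Lex (β.ToType → Set.Icc (0 : ℝ) 1)) := by
  obtain ⟨α₁, hα₁, ⟨f⟩⟩ := hA
  obtain ⟨α₂, hα₂, ⟨g⟩⟩ := hB
  have := countable_toType_of_lt_omega_one hα₁
  have := countable_toType_of_lt_omega_one hα₂
  obtain ⟨F, hF⟩ := exists_strictMono_union_to_piLex_sum f g
  obtain ⟨β, hβ, ⟨e⟩⟩ := exists_lt_omega_one_orderIso_toType ((α₁.ToType ⊕ₗ α₂.ToType) ⊕ₗ Unit)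
  exact ⟨β, hβ, ⟨OrderEmbedding.ofStrictMono _ ((Pi.Lex.strictMono_comp_orderIso e).comp hF)⟩⟩
end
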